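/- (Mean curvature vector identity: ∇_S · I_S = −n (∇_S · n).) Let n : ℝ³ → ℝ³ be differentiable at x ∈ ℝ³ with ⟪n(x), n(x)⟫ = 1, write P_{ik}(y) = δ_{ik} − nᵢ(y) nₖ(y), and let (∂_{S,i} ψ)(y) = Σₖ P_{ik}(y) (∂ₖ ψ)(y). Then for each j ∈ {1,2,3}: Σᵢ ∂_{S,i}(P_{ij})(x) = − nⱼ(x) (Σᵢ ∂_{S,i} nᵢ)(x). -/

import Mathlib

/-- The partial derivative of `ψ : ℝ³ → ℝ` in the `k`-th coordinate direction. -/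
noncomputable def pd (k : Fin 3) (ψ : (Fin 3 → ℝ) → ℝ) (y : Fin 3 → ℝ) : ℝ :=
  fderiv ℝ ψ y (Pi.single k 1)

/-- The surface identity tensor `P = I − n nᵀ` associated with a unit normal field `n`. -/
def P (n : (Fin 3 → ℝ) → (Fin 3 → ℝ)) (i k : Fin 3) (y : Fin 3 → ℝ) : ℝ :=
  (if i = k then (1 : ℝ) else 0) - n y i * n y k

/-- The boundary (tangential) directional derivative `∂_{S,i} ψ = Σₖ P_{ik} ∂ₖ ψ`. -/
noncomputable def pdS (n : (Fin 3 → ℝ) → (Fin 3 → ℝ)) (i : Fin 3)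
    (ψ : (Fin 3 → ℝ) → ℝ) (y : Fin 3 → ℝ) : ℝ :=
  ∑ k, P n i k y * pd k ψ y

/-! Since `∂_{S,i}` is a derivation, `∂_{S,i} P_{ij} = −(∂_{S,i} nᵢ) nⱼ − nᵢ ∂_{S,i} nⱼ`.
Summed over `i`, the first term gives `−nⱼ ∇_S · n`, and the second vanishes because
`Σᵢ nᵢ P_{ik} = nₖ − |n|² nₖ = 0`: the surface gradient has no normal component. -/

section

variable {ψ φ : (Fin 3 → ℝ) → ℝ} {x : Fin 3 → ℝ}

theorem pd_mul (k : Fin 3) (hψ : DifferentiableAt ℝ ψ x) (hφ : DifferentiableAt ℝ φ x) :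
    pd k (fun y => ψ y * φ y) x = pd k ψ x * φ x + ψ x * pd k φ x := by
  simp only [pd, fderiv_fun_mul hψ hφ, add_apply, smul_apply, smul_eq_mul]
  ring

theorem pd_const_sub (k : Fin 3) (c : ℝ) :
    pd k (fun y => c - ψ y) x = -pd k ψ x := by
  simp only [pd, fderiv_const_sub, neg_apply]

variable (n : (Fin 3 → ℝ) → (Fin 3 → ℝ)) (i : Fin 3)

theorem pdS_mul (hψ : DifferentiableAt ℝ ψ x) (hφ : DifferentiableAt ℝ φ x) :
    pdS n i (fun y => ψ y * φ y) x = pdS n i ψ x * φ x + ψ x * pdS n i φ x := by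
  simp only [pdS, pd_mul _ hψ hφ, mul_add, Finset.sum_add_distrib, Finset.sum_mul,
    Finset.mul_sum]
  congr 1 <;> refine Finset.sum_congr rfl fun k _ => by ring

theorem pdS_const_sub (c : ℝ) :
    pdS n i (fun y => c - ψ y) x = -pdS n i ψ x := by
  simp only [pdS, pd_const_sub, mul_neg, Finset.sum_neg_distrib]

theorem sum_mul_P_eq_zero (hunit : ∑ i, n x i * n x i = 1) (k : Fin 3) :
    ∑ i, n x i * P n i k x = 0 := by
  simp only [P, mul_sub, Finset.sum_sub_distrib, mul_ite, mul_one, mul_zero,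
    Finset.sum_ite_eq', Finset.mem_univ, if_true, ← mul_assoc, ← Finset.sum_mul, hunit]
  ring

theorem sum_mul_pdS_eq_zero (hunit : ∑ i, n x i * n x i = 1) :
    ∑ i, n x i * pdS n i ψ x = 0 := by
  simp only [pdS, Finset.mul_sum, ← mul_assoc]
  rw [Finset.sum_comm]
  simp only [← Finset.sum_mul, sum_mul_P_eq_zero n hunit, zero_mul, Finset.sum_const_zero]

end

/-- Mean curvature vector identity: `∇_S · I_S = −n (∇_S · n)`, componentwise
`Σᵢ ∂_{S,i} P_{ij} = − nⱼ (Σᵢ ∂_{S,i} nᵢ)`. -/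
theorem surface_div_surface_identity_tensor
    (n : (Fin 3 → ℝ) → (Fin 3 → ℝ)) (x : Fin 3 → ℝ)
    (hn : DifferentiableAt ℝ n x)
    (hunit : ∑ i, n x i * n x i = 1) (j : Fin 3) :
    ∑ i, pdS n i (fun y => P n i j y) x
      = - (n x j * (∑ i, pdS n i (fun y => n y i) x)) := by
  have hcoord : ∀ i, DifferentiableAt ℝ (fun y => n y i) x := differentiableAt_pi.mp hn
  have hderiv : ∀ i, pdS n i (fun y => P n i j y) x
      = -(pdS n i (fun y => n y i) x * n x j + n x i * pdS n i (fun y => n y j) x) :=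
    fun i => by rw [← pdS_mul n i (hcoord i) (hcoord j)]; exact pdS_const_sub n i _
  simp only [hderiv, Finset.sum_neg_distrib, Finset.sum_add_distrib, ← Finset.sum_mul,
    sum_mul_pdS_eq_zero n hunit]
  ring
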